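/- arXiv:2008.12911 — 2 statements merged into one kernel-verified Lean document; each statement's English description precedes it below -/
import Mathlib

section
/- Let k ≥ 2 be an integer, ρ > 0, s ∈ (0,1), and let b_j = ρ (cos(2πj/k), sin(2πj/k)) for j = 0,…,k-1 be the vertices of a regular k-gon inscribed in the circle of radius ρ. Then for every j ∈ {0,…,k-1}: Σ_{l≠j} (b_j - b_l)/|b_j - b_l|^{4-2s} = 2^{s-2} ρ^{2s-4} ( Σ_{m=1}^{k-1} (1 - cos(2πm/k))^{s-1} ) · b_j. -/
open Real Finset RealInnerProductSpace

noncomputable section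

/-- The plane `ℝ²` with the Euclidean norm. -/
abbrev E2 := EuclideanSpace ℝ (Fin 2)

/-- For `a = (a₁, a₂)`, `perp a = a^⊥ = (a₂, -a₁)`. -/
def perp (a : E2) : E2 := !₂[a 1, -(a 0)]

/-- `e₁ = (1,0)`. -/
def e1 : E2 := !₂[1, 0]

/-- `e₂ = (0,1)`. -/
def e2 : E2 := !₂[0, 1]

/-- `K_s = Γ(2-s) / (2^(2s-1) π Γ(s))`. -/
def Ks (s : ℝ) : ℝ := Real.Gamma (2 - s) / (2 ^ (2*s - 1) * Real.pi * Real.Gamma s)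

/-- Counterclockwise rotation of the plane by angle `θ`. -/
def rot (θ : ℝ) (a : E2) : E2 :=
  !₂[Real.cos θ * a 0 - Real.sin θ * a 1, Real.sin θ * a 0 + Real.cos θ * a 1]

/-
Writing `l = j + m`, the vertex `b_l` is `b_j` rotated by `φ_m = 2πm/k`, and for any `a` in the
plane `a - R_φ a = (1 - cos φ) a + sin φ a^⊥` with `|a - R_φ a|² = 2 (1 - cos φ) |a|²`. Hence the
`m`-th summand is `2^{s-2} ρ^{2s-4} ((1 - cos φ_m)^{s-1} b_j + (1 - cos φ_m)^{s-2} sin φ_m b_j^⊥)`,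
and the `b_j^⊥` components cancel under the reflection `m ↦ k - m`, which fixes `cos φ_m` and
flips the sign of `sin φ_m`.
-/

open Fin.NatCast

def unitVec (θ : ℝ) : E2 := !₂[cos θ, sin θ]

lemma unitVec_periodic : Function.Periodic unitVec (2 * π) := by
  intro θ
  simp [unitVec]

lemma unitVec_two_pi_mul_mod_div (n k : ℕ) :
    unitVec (2 * π * ((n % k : ℕ) : ℝ) / k) = unitVec (2 * π * n / k) := by
  rcases eq_or_ne k 0 with rfl | hk
  · simp
  conv_rhs => rw [← Nat.mod_add_div n k]
  have : 2 * π * ((n % k + k * (n / k) : ℕ) : ℝ) / k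
      = 2 * π * ((n % k : ℕ) : ℝ) / k + (n / k : ℕ) * (2 * π) := by
    push_cast; field_simp
  rw [this, unitVec_periodic.nat_mul]

lemma rot_smul_unitVec (φ ρ θ : ℝ) : rot φ (ρ • unitVec θ) = ρ • unitVec (θ + φ) := by
  ext i
  fin_cases i <;>
    simp only [rot, unitVec, Fin.zero_eta, Fin.mk_one, PiLp.smul_apply, smul_eq_mul,
      Matrix.cons_val_zero, Matrix.cons_val_one, Matrix.cons_val_fin_one, cos_add, sin_add] <;>
    ring

lemma norm_smul_unitVec (ρ θ : ℝ) : ‖ρ • unitVec θ‖ = |ρ| := by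
  rw [norm_smul, EuclideanSpace.norm_eq, Fin.sum_univ_two]
  simp [unitVec]

lemma self_sub_rot (φ : ℝ) (a : E2) : a - rot φ a = (1 - cos φ) • a + sin φ • perp a := by
  ext i
  fin_cases i <;>
    simp only [rot, perp, Fin.zero_eta, Fin.mk_one, PiLp.sub_apply, PiLp.add_apply,
      PiLp.smul_apply, smul_eq_mul, Matrix.cons_val_zero, Matrix.cons_val_one,
      Matrix.cons_val_fin_one] <;>
    ring

lemma norm_self_sub_rot_sq (φ : ℝ) (a : E2) : ‖a - rot φ a‖ ^ 2 = 2 * (1 - cos φ) * ‖a‖ ^ 2 := by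
  simp only [EuclideanSpace.norm_sq_eq, Fin.sum_univ_two, Real.norm_eq_abs, sq_abs, rot,
    PiLp.sub_apply, Matrix.cons_val_zero, Matrix.cons_val_one, Matrix.cons_val_fin_one]
  linear_combination (a 0 ^ 2 + a 1 ^ 2) * sin_sq_add_cos_sq φ

lemma one_div_norm_self_sub_rot_rpow (φ s : ℝ) (a : E2) :
    1 / ‖a - rot φ a‖ ^ (4 - 2 * s) = 2 ^ (s - 2) * ‖a‖ ^ (2 * s - 4) * (1 - cos φ) ^ (s - 2) := by
  have hc : 0 ≤ 1 - cos φ := by linarith [cos_le_one φ]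
  have hsq : ‖a - rot φ a‖ ^ (4 - 2 * s) = (2 * (1 - cos φ) * ‖a‖ ^ 2) ^ (2 - s) := by
    rw [← norm_self_sub_rot_sq, ← rpow_natCast, ← rpow_mul (norm_nonneg _)]
    push_cast
    ring_nf
  rw [hsq, one_div, ← rpow_neg (by positivity), mul_rpow (by positivity) (by positivity),
    mul_rpow (by norm_num) hc, ← rpow_natCast, ← rpow_mul (norm_nonneg _)]
  ring_nf

lemma one_div_norm_self_sub_rot_rpow_smul {φ : ℝ} (hφ : cos φ ≠ 1) (s : ℝ) (a : E2) :
    (1 / ‖a - rot φ a‖ ^ (4 - 2 * s)) • (a - rot φ a) = (2 ^ (s - 2) * ‖a‖ ^ (2 * s - 4)) •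
      ((1 - cos φ) ^ (s - 1) • a + ((1 - cos φ) ^ (s - 2) * sin φ) • perp a) := by
  have hpow : (1 - cos φ) ^ (s - 1) = (1 - cos φ) ^ (s - 2) * (1 - cos φ) := by
    rw [← rpow_add_one (sub_ne_zero.mpr hφ.symm)]; ring_nf
  rw [one_div_norm_self_sub_rot_rpow, self_sub_rot, hpow]
  module

lemma cos_two_pi_mul_div_ne_one {k m : ℕ} (hm : m ∈ Ico 1 k) : cos (2 * π * m / k) ≠ 1 := by
  rw [mem_Ico] at hm
  rw [Ne, cos_eq_one_iff]
  rintro ⟨n, hn⟩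
  have hk : (k : ℝ) ≠ 0 := Nat.cast_ne_zero.mpr (by omega)
  rw [eq_div_iff hk] at hn
  have hnk : n * k = m := by
    suffices ((n * k : ℤ) : ℝ) = m by exact_mod_cast this
    push_cast
    apply mul_left_cancel₀ two_pi_pos.ne'
    linear_combination hn
  rcases le_or_gt n 0 with h | h <;> nlinarith

lemma sum_Ico_mul_sin_two_pi_mul_div (k : ℕ) (g : ℝ → ℝ) :
    ∑ m ∈ Ico 1 k, g (cos (2 * π * m / k)) * sin (2 * π * m / k) = 0 := by
  set S := ∑ m ∈ Ico 1 k, g (cos (2 * π * m / k)) * sin (2 * π * m / k)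
  have hreflect :
      S = ∑ m ∈ Ico 1 k, g (cos (2 * π * ↑(k - m) / k)) * sin (2 * π * ↑(k - m) / k) := by
    rw [sum_Ico_reflect (fun m : ℕ => g (cos (2 * π * m / k)) * sin (2 * π * m / k)) 1
      (Nat.le_succ k), Nat.add_sub_cancel_left, Nat.add_sub_cancel]
  have hneg : S = -S := by
    conv_rhs => rw [← sum_neg_distrib]
    rw [hreflect]
    refine sum_congr rfl fun m hm => ?_
    have hk : (k : ℝ) ≠ 0 := Nat.cast_ne_zero.mpr (by rw [mem_Ico] at hm; omega)
    have hangle : 2 * π * ↑(k - m) / k = 2 * π - 2 * π * m / k := by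
      rw [Nat.cast_sub (mem_Ico.mp hm).2.le]; field_simp
    rw [hangle, cos_two_pi_sub, sin_two_pi_sub, mul_neg]
  linarith

lemma Fin.sum_sdiff_singleton_eq_sum_Ico {M : Type*} [AddCommMonoid M] {k : ℕ} [NeZero k]
    (f : Fin k → M) (j : Fin k) : ∑ l ∈ univ \ {j}, f l = ∑ m ∈ Ico 1 k, f (j + m) := by
  refine (sum_nbij' (fun m : ℕ => j + m) (fun l : Fin k => (l - j).val) ?_ ?_ ?_ ?_
    fun _ _ => rfl).symm
  · intro m hm
    rw [mem_Ico] at hm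
    simp only [mem_sdiff, mem_univ, mem_singleton, add_eq_left, true_and]
    rw [← Fin.val_eq_val, Fin.val_natCast, Nat.mod_eq_of_lt hm.2, Fin.val_zero]
    omega
  · intro l hl
    simp only [mem_sdiff, mem_univ, mem_singleton, true_and] at hl
    have : (l - j).val ≠ 0 := Fin.val_ne_zero_iff.mpr (sub_ne_zero.mpr hl)
    rw [mem_Ico]
    omega
  · intro m hm
    rw [mem_Ico] at hm
    simp [Fin.val_natCast, Nat.mod_eq_of_lt hm.2]
  · intro l _
    simp

lemma smul_unitVec_two_pi_mul_add_div {k : ℕ} [NeZero k] (ρ : ℝ) (j : Fin k) (m : ℕ) :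
    ρ • unitVec (2 * π * ((j + m : Fin k) : ℕ) / k) =
      rot (2 * π * m / k) (ρ • unitVec (2 * π * j / k)) := by
  rw [rot_smul_unitVec, Fin.val_add, Fin.val_natCast, Nat.add_mod_mod, unitVec_two_pi_mul_mod_div]
  congr 2
  push_cast
  ring

theorem statement3_general (k : ℕ) (ρ : ℝ) (hρ : 0 < ρ)
    (s : ℝ)
    (b : Fin k → E2)
    (hb : ∀ j : Fin k,
      b j = ρ • (!₂[Real.cos (2*Real.pi*(j:ℝ)/k), Real.sin (2*Real.pi*(j:ℝ)/k)] : E2)) :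
    ∀ j : Fin k,
      ∑ l ∈ Finset.univ \ {j}, ((1:ℝ) / ‖b j - b l‖ ^ (4 - 2*s)) • (b j - b l)
        = ((2:ℝ) ^ (s - 2) * ρ ^ (2*s - 4) *
            ∑ m ∈ Finset.Ico 1 k, (1 - Real.cos (2*Real.pi*(m:ℝ)/k)) ^ (s - 1)) • b j := by
  intro j
  have : NeZero k := ⟨j.pos.ne'⟩
  have hrot (m : ℕ) : b (j + m) = rot (2 * π * m / k) (b j) := by
    rw [hb, hb]
    exact smul_unitVec_two_pi_mul_add_div ρ j m
  have hnorm : ‖b j‖ = ρ := by rw [hb, ← unitVec, norm_smul_unitVec, abs_of_pos hρ]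
  have hodd : ∑ m ∈ Ico 1 k, (1 - cos (2 * π * m / k)) ^ (s - 2) * sin (2 * π * m / k) = 0 :=
    sum_Ico_mul_sin_two_pi_mul_div k fun c => (1 - c) ^ (s - 2)
  rw [Fin.sum_sdiff_singleton_eq_sum_Ico, sum_congr rfl fun m hm => by
      rw [hrot m, one_div_norm_self_sub_rot_rpow_smul (cos_two_pi_mul_div_ne_one hm)],
    ← smul_sum, sum_add_distrib, ← sum_smul, ← sum_smul, hodd, zero_smul, add_zero, hnorm, smul_smul]

/-- for the vertices `b_j = ρ(cos(2πj/k), sin(2πj/k))` of a regular `k`-gon,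
`Σ_{l≠j} (b_j - b_l)/|b_j - b_l|^{4-2s}
  = 2^{s-2} ρ^{2s-4} (Σ_{m=1}^{k-1} (1 - cos(2πm/k))^{s-1}) b_j`. -/
theorem statement3 (k : ℕ) (hk : 2 ≤ k) (ρ : ℝ) (hρ : 0 < ρ)
    (s : ℝ) (hs : s ∈ Set.Ioo (0:ℝ) 1)
    (b : Fin k → E2)
    (hb : ∀ j : Fin k,
      b j = ρ • (!₂[Real.cos (2*Real.pi*(j:ℝ)/k), Real.sin (2*Real.pi*(j:ℝ)/k)] : E2)) :
    ∀ j : Fin k,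
      ∑ l ∈ Finset.univ \ {j}, ((1:ℝ) / ‖b j - b l‖ ^ (4 - 2*s)) • (b j - b l)
        = ((2:ℝ) ^ (s - 2) * ρ ^ (2*s - 4) *
            ∑ m ∈ Finset.Ico 1 k, (1 - Real.cos (2*Real.pi*(m:ℝ)/k)) ^ (s - 1)) • b j :=
  statement3_general k ρ hρ s b hb
end
end

section
/- Let s ∈ (0,1), c ∈ ℝ, m₁,…,m_k ∈ ℝ all nonzero, and let b = (b₁,…,b_k) ∈ (ℝ²)^k have pairwise distinct components. Then b is a critical point of I (i.e. the total derivative of I at b vanishes) if and only if for every j ∈ {1,…,k}: c e₂ = (Γ(2-s)/(2^{2s-3} π Γ(s))) Σ_{i≠j} m_i (b_i - b_j)^⊥/|b_i - b_j|^{4-2s}; that is, critical points of I correspond to solutions of the traveling point-vortex system. -/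
open Real Finset RealInnerProductSpace

noncomputable section

/-!
Write the derivative of the energy at `b` as `v ↦ ∑ⱼ ⟪Aⱼ, vⱼ⟫`; then `b` is critical iff every `Aⱼ`
vanishes. From `∇‖x‖^q = q ‖x‖^(q-2) x` one gets, with `q = 2s - 2` and `K` the prefactor of the
interaction,
`Aⱼ = mⱼ (c e₁ + 2Kq ∑_{i≠j} mᵢ ‖bⱼ - bᵢ‖^(q-2) (bⱼ - bᵢ))`,
and `Γ(2-s) = (1-s) Γ(1-s)` turns `-2Kq` into the constant of the vortex system. Since `mⱼ ≠ 0`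
and the rotation `a ↦ a^⊥` is injective and sends `e₁` to `-e₂`, `Aⱼ = 0` is the `j`-th vortex
equation.
-/

lemma hasFDerivAt_norm_rpow_of_ne_zero {E : Type*} [NormedAddCommGroup E] [InnerProductSpace ℝ E]
    {x : E} (hx : x ≠ 0) (p : ℝ) :
    HasFDerivAt (fun y : E ↦ ‖y‖ ^ p) ((p * ‖x‖ ^ (p - 2)) • innerSL ℝ x) x := by
  have hsq : HasFDerivAt (fun y : E ↦ ‖y‖ ^ 2) (2 • innerSL ℝ x) x :=
    (hasStrictFDerivAt_norm_sq x).hasFDerivAt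
  convert hsq.rpow_const (p := p / 2) (by simp [hx]) using 1
  · ext y
    rw [← Real.rpow_natCast, ← Real.rpow_mul (norm_nonneg y)]
    ring_nf
  · rw [← Real.rpow_natCast, ← Real.rpow_mul (norm_nonneg x), ← Nat.cast_smul_eq_nsmul ℝ,
      smul_smul]
    ring_nf

section InnerPairing

variable {ι F : Type*} [Fintype ι] [NormedAddCommGroup F] [InnerProductSpace ℝ F]

def innerPairing (G : ι → F) : (ι → F) →L[ℝ] ℝ :=
  ∑ j, (innerSL ℝ (G j)).comp (ContinuousLinearMap.proj j)

@[simp]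
lemma innerPairing_apply (G v : ι → F) : innerPairing G v = ∑ j, ⟪G j, v j⟫ := by
  simp [innerPairing]

lemma innerPairing_add (G H : ι → F) :
    innerPairing (G + H) = innerPairing G + innerPairing H := by
  ext v
  simp [inner_add_left, sum_add_distrib]

lemma innerPairing_smul (a : ℝ) (G : ι → F) : innerPairing (a • G) = a • innerPairing G := by
  ext v
  simp [inner_smul_left, mul_sum]

lemma innerPairing_eq_zero_iff {G : ι → F} : innerPairing G = 0 ↔ G = 0 := by
  classical
  refine ⟨fun h => funext fun j => ?_, fun h => by simp [h, innerPairing]⟩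
  have hj := congrArg (· (Pi.single j (G j))) h
  simp only [innerPairing_apply, Pi.single_apply, apply_ite, inner_zero_right, sum_ite_eq',
    mem_univ, if_true, zero_apply] at hj
  exact inner_self_eq_zero.mp hj

end InnerPairing

lemma sum_sdiff_singleton_comm {ι M : Type*} [Fintype ι] [DecidableEq ι] [AddCommMonoid M]
    (g : ι → ι → M) :
    ∑ i, ∑ j ∈ univ \ {i}, g i j = ∑ i, ∑ j ∈ univ \ {i}, g j i :=
  Finset.sum_comm' (by simp [eq_comm])

section PairEnergy

variable {ι F : Type*} [Fintype ι] [DecidableEq ι] [NormedAddCommGroup F] [InnerProductSpace ℝ F]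

def pairEnergy (m : ι → ℝ) (q : ℝ) (x : ι → F) : ℝ :=
  ∑ i, ∑ j ∈ univ \ {i}, m i * m j * ‖x i - x j‖ ^ q

def pairEnergyGrad (m : ι → ℝ) (q : ℝ) (x : ι → F) (j : ι) : F :=
  (2 * q * m j) • ∑ i ∈ univ \ {j}, (m i * ‖x j - x i‖ ^ (q - 2)) • (x j - x i)

lemma hasFDerivAt_pairEnergy (m : ι → ℝ) (q : ℝ) {b : ι → F} (hb : Function.Injective b) :
    HasFDerivAt (pairEnergy m q) (innerPairing (pairEnergyGrad m q b)) b := by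
  set t : ι → ι → ℝ := fun i j => m i * m j * q * ‖b i - b j‖ ^ (q - 2) with ht
  let pr (i : ι) : (ι → F) →L[ℝ] F := ContinuousLinearMap.proj i
  have hterm : ∀ i, ∀ j ∈ univ \ {i}, HasFDerivAt (fun x : ι → F => m i * m j * ‖x i - x j‖ ^ q)
      (t i j • (innerSL ℝ (b i - b j)).comp (pr i - pr j)) b := by
    intro i j hj
    have hij : b i - b j ≠ 0 := sub_ne_zero.mpr (hb.ne (by simpa [eq_comm] using hj))
    have hdiff : HasFDerivAt (fun x : ι → F => x i - x j) (pr i - pr j) b :=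
      (pr i - pr j).hasFDerivAt
    have := ((hasFDerivAt_norm_rpow_of_ne_zero hij q).comp b hdiff).const_mul (m i * m j)
    rwa [ContinuousLinearMap.smul_comp, smul_smul, ← mul_assoc] at this
  have hsym : ∀ i j, t j i = t i j := fun i j => by simp only [ht, norm_sub_rev]; ring
  refine (HasFDerivAt.fun_sum fun i _ => HasFDerivAt.fun_sum (hterm i)).congr_fderiv ?_
  ext v
  simp only [FunLike.coe_sum, Finset.sum_apply, smul_apply,
    ContinuousLinearMap.comp_apply, sub_apply, innerSL_apply_apply,
    innerPairing_apply, smul_eq_mul, pr, ContinuousLinearMap.proj_apply]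
  -- Relabelling the `v j` half and using the symmetry of `t` doubles the `v i` half.
  calc ∑ i, ∑ j ∈ univ \ {i}, t i j * ⟪b i - b j, v i - v j⟫
      = ∑ i, ∑ j ∈ univ \ {i}, t i j * ⟪b i - b j, v i⟫
          + ∑ i, ∑ j ∈ univ \ {i}, t j i * ⟪b i - b j, v i⟫ := by
        rw [sum_sdiff_singleton_comm (fun i j => t j i * ⟪b i - b j, v i⟫), ← sum_add_distrib]
        refine sum_congr rfl fun i _ => ?_
        rw [← sum_add_distrib]
        refine sum_congr rfl fun j _ => ?_
        rw [hsym, inner_sub_right, ← neg_sub (b i), inner_neg_left]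
        ring
    _ = ∑ j, ⟪pairEnergyGrad m q b j, v j⟫ := by
        simp only [pairEnergyGrad, hsym, inner_smul_left, sum_inner, mul_sum, ← sum_add_distrib]
        refine sum_congr rfl fun i _ => sum_congr rfl fun j _ => ?_
        simp only [ht, conj_trivial]
        ring

end PairEnergy

lemma perp_add (a a' : E2) : perp (a + a') = perp a + perp a' := by
  ext l; fin_cases l <;> simp [perp, add_comm]

lemma perp_smul (r : ℝ) (a : E2) : perp (r • a) = r • perp a := by
  ext l; fin_cases l <;> simp [perp]

def perpₗ : E2 →ₗ[ℝ] E2 where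
  toFun := perp
  map_add' := perp_add
  map_smul' := perp_smul

lemma perp_sum {ι : Type*} (t : Finset ι) (f : ι → E2) :
    perp (∑ i ∈ t, f i) = ∑ i ∈ t, perp (f i) :=
  map_sum perpₗ f t

lemma perp_perp (a : E2) : perp (perp a) = -a := by
  ext l; fin_cases l <;> simp [perp]

lemma perp_injective : Function.Injective perp := fun a a' h => by
  simpa [perp_perp] using congrArg perp h

lemma perp_e1 : perp e1 = -e2 := by
  ext l; fin_cases l <;> simp [perp, e1, e2]

lemma smul_e1_add_pairEnergyGrad_eq_zero_iff {ι : Type*} [Fintype ι] [DecidableEq ι]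
    {m : ι → ℝ} {j : ι} (hmj : m j ≠ 0) (c K q : ℝ) (b : ι → E2) :
    (c * m j) • e1 + K • pairEnergyGrad m q b j = 0 ↔
      c • e2 = (-(2 * K * q)) •
        ∑ i ∈ univ \ {j}, (m i * ‖b i - b j‖ ^ (q - 2)) • perp (b i - b j) := by
  set S := ∑ i ∈ univ \ {j}, (m i * ‖b j - b i‖ ^ (q - 2)) • (b j - b i)
  have hperpS :
      perp S = -∑ i ∈ univ \ {j}, (m i * ‖b i - b j‖ ^ (q - 2)) • perp (b i - b j) := by
    simp only [S, perp_sum, perp_smul, ← sum_neg_distrib, ← smul_neg, norm_sub_rev (b j)]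
    refine sum_congr rfl fun i _ => ?_
    rw [← neg_sub (b i), ← neg_one_smul ℝ (b i - b j), perp_smul, neg_one_smul]
  have hfactor :
      (c * m j) • e1 + K • pairEnergyGrad m q b j = m j • (c • e1 + (2 * K * q) • S) := by
    simp only [pairEnergyGrad, S]
    module
  rw [hfactor, smul_eq_zero, or_iff_right hmj, ← perp_injective.eq_iff, perp_add, perp_smul,
    perp_smul, perp_e1, hperpS, show perp 0 = 0 from map_zero perpₗ, smul_neg, smul_neg,
    ← neg_add, neg_eq_zero, add_eq_zero_iff_eq_neg, neg_smul]

lemma Gamma_two_sub_div {s : ℝ} (hs : s ≠ 1) :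
    Gamma (2 - s) / (2 ^ (2 * s - 3) * π * Gamma s)
      = 4 * (1 - s) * (Gamma (1 - s) / (π * 2 ^ (2 * s - 1) * Gamma s)) := by
  rw [show 2 - s = (1 - s) + 1 by ring, Gamma_add_one (sub_ne_zero.mpr hs.symm),
    show 2 * s - 1 = (2 * s - 3) + 2 by ring, rpow_add two_pos]
  norm_num
  ring

theorem statement11_general (s : ℝ) (hs : s ∈ Set.Ioo (0:ℝ) 1) (k : ℕ) (c : ℝ)
    (m : Fin k → ℝ) (hm : ∀ i, m i ≠ 0) (b : Fin k → E2) (hb : Function.Injective b)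
    (I : (Fin k → E2) → ℝ)
    (hI : ∀ x : Fin k → E2, I x = c * ∑ i, m i * ⟪x i, e1⟫
        + (Real.Gamma (1-s) / (Real.pi * 2 ^ (2*s-1) * Real.Gamma s)) *
            ∑ i, ∑ j ∈ Finset.univ \ {i}, m i * m j * ‖x i - x j‖ ^ (-(2 - 2*s))) :
    fderiv ℝ I b = 0 ↔
      ∀ j : Fin k, c • e2
        = (Real.Gamma (2-s) / (2 ^ (2*s-3) * Real.pi * Real.Gamma s)) •
            ∑ i ∈ Finset.univ \ {j}, (m i / ‖b i - b j‖ ^ (4 - 2*s)) • perp (b i - b j) := by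
  set K := Gamma (1 - s) / (π * 2 ^ (2 * s - 1) * Gamma s)
  set q := -(2 - 2 * s)
  have hI_eq : I = fun x => innerPairing (fun i => (c * m i) • e1) x + K * pairEnergy m q x := by
    funext x
    simp only [hI, innerPairing_apply, pairEnergy, real_inner_smul_left, real_inner_comm e1,
      mul_sum, mul_assoc]
  have hderiv : HasFDerivAt I
      (innerPairing ((fun j => (c * m j) • e1) + K • pairEnergyGrad m q b)) b := by
    rw [hI_eq, innerPairing_add, innerPairing_smul]
    exact (innerPairing _).hasFDerivAt.add ((hasFDerivAt_pairEnergy m q hb).const_mul K)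
  have hconst : -(2 * K * q) = Gamma (2 - s) / (2 ^ (2 * s - 3) * π * Gamma s) := by
    rw [Gamma_two_sub_div hs.2.ne]
    ring
  have hweight : ∀ i j, m i * ‖b i - b j‖ ^ (q - 2) = m i / ‖b i - b j‖ ^ (4 - 2 * s) := by
    intro i j
    rw [div_eq_mul_inv, ← rpow_neg (norm_nonneg _), show q - 2 = -(4 - 2 * s) by ring]
  rw [hderiv.fderiv, innerPairing_eq_zero_iff, funext_iff]
  refine forall_congr' fun j => ?_
  rw [Pi.add_apply, Pi.smul_apply, Pi.zero_apply,
    smul_e1_add_pairEnergyGrad_eq_zero_iff (hm j), hconst]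
  simp only [hweight]

/-- for nonzero intensities, a configuration with pairwise distinct points is a
critical point of `I` iff it solves the traveling point-vortex system:
`c e₂ = (Γ(2-s)/(2^{2s-3} π Γ(s))) Σ_{i≠j} m_i (b_i - b_j)^⊥/|b_i - b_j|^{4-2s}` for all `j`. -/
theorem statement11 (s : ℝ) (hs : s ∈ Set.Ioo (0:ℝ) 1) (k : ℕ) (hk : 1 ≤ k) (c : ℝ)
    (m : Fin k → ℝ) (hm : ∀ i, m i ≠ 0) (b : Fin k → E2) (hb : Function.Injective b)
    (I : (Fin k → E2) → ℝ)
    (hI : ∀ x : Fin k → E2, I x = c * ∑ i, m i * ⟪x i, e1⟫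
        + (Real.Gamma (1-s) / (Real.pi * 2 ^ (2*s-1) * Real.Gamma s)) *
            ∑ i, ∑ j ∈ Finset.univ \ {i}, m i * m j * ‖x i - x j‖ ^ (-(2 - 2*s))) :
    fderiv ℝ I b = 0 ↔
      ∀ j : Fin k, c • e2
        = (Real.Gamma (2-s) / (2 ^ (2*s-3) * Real.pi * Real.Gamma s)) •
            ∑ i ∈ Finset.univ \ {j}, (m i / ‖b i - b j‖ ^ (4 - 2*s)) • perp (b i - b j) :=
  statement11_general s hs k c m hm b hb I hI
end
end
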